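/- (Theorem 4) Under Assumptions 1 and 2, define δ₁ := C₀C₁/m² + C₂/m, δ₂ := C₀²C₁/(2m³) + C₀C₂/m² + C₃/(2m), δ₂' := δ₂ + C₃/(2m), Q := 2m/C₁, and σ := 1 + h·δ₁. Let c > 0 be any constant. If the sampling period satisfies h ≤ min{1, [Q^{2τ−1}·c / ((1+δ₁)·c + δ₂')^{2τ}]^{1/(4τ−2)}}, and the initial error satisfies ‖x₀ − x*(t₀)‖ ≤ c·h², then the ANT iterates satisfy, for all k ≥ 1: ‖x_k − x*(t_k)‖ ≤ Q^{−(2τ−1)}·(σc + δ₂')^{2τ}·h^{4τ}. -/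

import Mathlib

/-!
Differentiating `∇ₓ f(x*(t); t) = 0` gives `ẋ* = -[∇ₓₓ f]⁻¹ ∇_{tx} f`, so the prediction step is
a first-order Taylor step along the optimal trajectory. Its error grows by at most the factor
`σ = 1 + h δ₁`, where `δ₁` is the Lipschitz constant of the drift `x ↦ [∇ₓₓ f]⁻¹ ∇_{tx} f`, plus
`δ₂ h²` from the Taylor remainder of `x*` and `C₃ h² / (2m)` from the backward difference.
Newton's method contracts as `e ↦ e² / Q`, so `τ` correction steps turn a predicted error
`e ≤ Q` into at most `Q (e / Q)^(2^τ) ≤ Q (e / Q)^(2τ)`. The step-size condition is equivalent to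
`Q (b / Q)^(2τ) ≤ c h²` for `b = ((1 + δ₁) c + δ₂') h²`, which forces `b ≤ Q`; hence an error
`≤ c h²` at `t_k` is predicted within `b` and corrected to the claimed bound, itself `≤ c h²`.
-/

noncomputable section

/-- The setting of a time-varying, smooth, strongly convex optimization problem
`min_{x ∈ ℝⁿ} f(x;t)`, bundling the objective `f`, its derivatives, the Hessian
inverse, the optimal trajectory `x*(t)`, and Assumptions 1 and 2 of the paper. -/
structure TVOpt (n : ℕ) where
  /-- the objective `f(x;t)` -/
  f : EuclideanSpace ℝ (Fin n) → ℝ → ℝ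
  /-- the gradient `∇ₓ f(x;t)` -/
  grad : EuclideanSpace ℝ (Fin n) → ℝ → EuclideanSpace ℝ (Fin n)
  /-- the Hessian `∇ₓₓ f(x;t)` -/
  hess : EuclideanSpace ℝ (Fin n) → ℝ →
    EuclideanSpace ℝ (Fin n) →L[ℝ] EuclideanSpace ℝ (Fin n)
  /-- the Hessian inverse `[∇ₓₓ f(x;t)]⁻¹` -/
  hessInv : EuclideanSpace ℝ (Fin n) → ℝ →
    EuclideanSpace ℝ (Fin n) →L[ℝ] EuclideanSpace ℝ (Fin n)
  /-- the mixed partial derivative `∇_{tx} f(x;t)` -/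
  dtgrad : EuclideanSpace ℝ (Fin n) → ℝ → EuclideanSpace ℝ (Fin n)
  /-- the third derivative tensor `∇ₓₓₓ f(x;t)` -/
  d3 : EuclideanSpace ℝ (Fin n) → ℝ →
    EuclideanSpace ℝ (Fin n) →L[ℝ] EuclideanSpace ℝ (Fin n) →L[ℝ] EuclideanSpace ℝ (Fin n)
  /-- the time derivative of the Hessian `∇_{xtx} f(x;t)` -/
  dthess : EuclideanSpace ℝ (Fin n) → ℝ →
    EuclideanSpace ℝ (Fin n) →L[ℝ] EuclideanSpace ℝ (Fin n)
  /-- the second time derivative of the gradient `∇_{ttx} f(x;t)` -/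
  dttgrad : EuclideanSpace ℝ (Fin n) → ℝ → EuclideanSpace ℝ (Fin n)
  /-- the optimal trajectory `x*(t)` -/
  xstar : ℝ → EuclideanSpace ℝ (Fin n)
  /-- strong convexity constant -/
  m : ℝ
  /-- Hessian norm bound (gradient Lipschitz constant) -/
  L : ℝ
  C0 : ℝ
  C1 : ℝ
  C2 : ℝ
  C3 : ℝ
  m_pos : 0 < m
  grad_spec : ∀ (x : EuclideanSpace ℝ (Fin n)) (t : ℝ), HasGradientAt (fun y => f y t) (grad x t) x
  hess_spec : ∀ (x : EuclideanSpace ℝ (Fin n)) (t : ℝ), HasFDerivAt (fun y => grad y t) (hess x t) x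
  dtgrad_spec : ∀ (x : EuclideanSpace ℝ (Fin n)) (t : ℝ), HasDerivAt (fun s => grad x s) (dtgrad x t) t
  d3_spec : ∀ (x : EuclideanSpace ℝ (Fin n)) (t : ℝ), HasFDerivAt (fun y => hess y t) (d3 x t) x
  dthess_spec : ∀ (x : EuclideanSpace ℝ (Fin n)) (t : ℝ), HasDerivAt (fun s => hess x s) (dthess x t) t
  dttgrad_spec : ∀ (x : EuclideanSpace ℝ (Fin n)) (t : ℝ), HasDerivAt (fun s => dtgrad x s) (dttgrad x t) t
  /-- Assumption 1: `∇ₓₓ f(x;t) ⪰ m·I` uniformly in `x` and `t`. -/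
  strong_convex : ∀ (x : EuclideanSpace ℝ (Fin n)) (t : ℝ) (v : EuclideanSpace ℝ (Fin n)),
    m * ‖v‖ ^ 2 ≤ @inner ℝ _ _ v (hess x t v)
  hessInv_left : ∀ (x : EuclideanSpace ℝ (Fin n)) (t : ℝ), ContinuousLinearMap.comp (hessInv x t) (hess x t) =
    ContinuousLinearMap.id ℝ (EuclideanSpace ℝ (Fin n))
  hessInv_right : ∀ (x : EuclideanSpace ℝ (Fin n)) (t : ℝ), ContinuousLinearMap.comp (hess x t) (hessInv x t) =
    ContinuousLinearMap.id ℝ (EuclideanSpace ℝ (Fin n))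
  /-- Assumption 2: bounded derivatives, uniformly in `x` and `t`. -/
  hess_bound : ∀ (x : EuclideanSpace ℝ (Fin n)) (t : ℝ), ‖hess x t‖ ≤ L
  dtgrad_bound : ∀ (x : EuclideanSpace ℝ (Fin n)) (t : ℝ), ‖dtgrad x t‖ ≤ C0
  d3_bound : ∀ (x : EuclideanSpace ℝ (Fin n)) (t : ℝ), ‖d3 x t‖ ≤ C1
  dthess_bound : ∀ (x : EuclideanSpace ℝ (Fin n)) (t : ℝ), ‖dthess x t‖ ≤ C2
  dttgrad_bound : ∀ (x : EuclideanSpace ℝ (Fin n)) (t : ℝ), ‖dttgrad x t‖ ≤ C3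
  /-- `x*(t)` minimizes `f(·;t)` -/
  xstar_min : ∀ t : ℝ, IsMinOn (fun x => f x t) Set.univ (xstar t)
  /-- equivalently, `∇ₓ f(x*(t);t) = 0` -/
  xstar_grad : ∀ t : ℝ, grad (xstar t) t = 0

open scoped RealInnerProductSpace

section Calculus

variable {E F : Type*} [NormedAddCommGroup E] [NormedSpace ℝ E]
  [NormedAddCommGroup F] [NormedSpace ℝ F]

theorem norm_image_one_le_of_norm_deriv_le_mul {φ φ' : ℝ → F} {K : ℝ}
    (hφ : ∀ θ, HasDerivAt φ (φ' θ) θ) (h0 : φ 0 = 0)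
    (hb : ∀ θ ∈ Set.Icc (0 : ℝ) 1, ‖φ' θ‖ ≤ K * θ) : ‖φ 1‖ ≤ K / 2 := by
  have hB (θ : ℝ) : HasDerivAt (fun θ : ℝ => K / 2 * θ ^ 2) (K * θ) θ := by
    exact ((hasDerivAt_pow 2 θ).const_mul (K / 2)).congr_deriv (by norm_num; ring)
  simpa using image_norm_le_of_norm_deriv_right_le_deriv_boundary
    (fun θ _ => (hφ θ).continuousAt.continuousWithinAt) (fun θ _ => (hφ θ).hasDerivWithinAt)
    (by simp [h0]) hB (fun θ hθ => hb θ ⟨hθ.1, hθ.2.le⟩) (Set.right_mem_Icc.2 zero_le_one)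

theorem norm_sub_sub_fderiv_le_of_lipschitz {g : E → F} {g' : E → E →L[ℝ] F} {K : ℝ}
    (hg : ∀ y, HasFDerivAt g (g' y) y) (hK : ∀ y z, ‖g' y - g' z‖ ≤ K * ‖y - z‖) (a b : E) :
    ‖g b - g a - g' a (b - a)‖ ≤ K / 2 * ‖b - a‖ ^ 2 := by
  set u := b - a
  have hφ (θ : ℝ) : HasDerivAt (fun θ : ℝ => g (a + θ • u) - g a - θ • g' a u)
      (g' (a + θ • u) u - g' a u) θ := by
    have hline : HasDerivAt (fun θ : ℝ => a + θ • u) u θ := by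
      simpa using ((hasDerivAt_id θ).smul_const u).const_add a
    exact (((hg _).comp_hasDerivAt θ hline).sub_const (g a)).sub
      (by simpa using (hasDerivAt_id θ).smul_const (g' a u))
  have hb : ∀ θ ∈ Set.Icc (0 : ℝ) 1, ‖g' (a + θ • u) u - g' a u‖ ≤ K * ‖u‖ ^ 2 * θ := by
    intro θ hθ
    calc ‖g' (a + θ • u) u - g' a u‖ ≤ ‖g' (a + θ • u) - g' a‖ * ‖u‖ := by
          rw [← sub_apply]; exact ContinuousLinearMap.le_opNorm _ _
      _ ≤ K * ‖a + θ • u - a‖ * ‖u‖ := by gcongr; exact hK _ _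
      _ = K * ‖u‖ ^ 2 * θ := by
          rw [add_sub_cancel_left, norm_smul, Real.norm_of_nonneg hθ.1]; ring
  have := norm_image_one_le_of_norm_deriv_le_mul hφ (by simp) hb
  rw [one_smul, one_smul, add_sub_cancel] at this
  linarith

theorem norm_sub_sub_smul_deriv_le_of_lipschitz {g g' : ℝ → F} {K : ℝ}
    (hg : ∀ s, HasDerivAt g (g' s) s) (hK : ∀ s r, ‖g' s - g' r‖ ≤ K * |s - r|) (t s : ℝ) :
    ‖g s - g t - (s - t) • g' t‖ ≤ K / 2 * (s - t) ^ 2 := by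
  have h := norm_sub_sub_fderiv_le_of_lipschitz (fun s => (hg s).hasFDerivAt)
    (K := K) (fun s r => by
      have : ContinuousLinearMap.toSpanSingleton ℝ (g' s)
          - ContinuousLinearMap.toSpanSingleton ℝ (g' r)
          = ContinuousLinearMap.toSpanSingleton ℝ (g' s - g' r) := by ext; simp
      simpa [this] using hK s r) t s
  simpa [sq_abs] using h

end Calculus

section InnerProduct

variable {H : Type*} [NormedAddCommGroup H] [InnerProductSpace ℝ H]

theorem mul_norm_le_norm_of_mul_sq_le_inner {m : ℝ} {u w : H} (h : m * ‖u‖ ^ 2 ≤ ⟪u, w⟫) :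
    m * ‖u‖ ≤ ‖w‖ := by
  rcases (norm_nonneg u).eq_or_lt with hu | hu
  · rw [← hu, mul_zero]; exact norm_nonneg w
  · have := h.trans (real_inner_le_norm u w)
    nlinarith

theorem mul_norm_sub_le_norm_sub_of_coercive {g : H → H} {A : H → H →L[ℝ] H} {m : ℝ}
    (hg : ∀ y, HasFDerivAt g (A y) y) (hA : ∀ y v, m * ‖v‖ ^ 2 ≤ ⟪v, A y v⟫) (a b : H) :
    m * ‖a - b‖ ≤ ‖g a - g b‖ := by
  set u := a - b
  have hρ (θ : ℝ) : HasDerivAt (fun θ : ℝ => ⟪u, g (b + θ • u)⟫) ⟪u, A (b + θ • u) u⟫ θ := by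
    have hline : HasDerivAt (fun θ : ℝ => b + θ • u) u θ := by
      simpa using ((hasDerivAt_id θ).smul_const u).const_add b
    simpa using (hasDerivAt_const θ u).inner ℝ ((hg _).comp_hasDerivAt θ hline)
  have hmono := mul_sub_le_image_sub_of_le_deriv (fun θ => (hρ θ).differentiableAt)
    (fun θ => (hρ θ).deriv ▸ hA _ u) zero_le_one
  refine mul_norm_le_norm_of_mul_sq_le_inner ?_
  simpa [u, inner_sub_right] using hmono

end InnerProduct

theorem dist_iterate_le_of_dist_le_sq_div {X : Type*} [PseudoMetricSpace X] {N : X → X} {z : X}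
    {Q : ℝ} (hQ : 0 < Q) (hN : ∀ y, dist (N y) z ≤ dist y z ^ 2 / Q) (y : X) (τ : ℕ) :
    dist (N^[τ] y) z ≤ Q * (dist y z / Q) ^ 2 ^ τ := by
  induction τ with
  | zero => rw [pow_zero, pow_one, mul_div_cancel₀ _ hQ.ne', Function.iterate_zero_apply]
  | succ k ih =>
    rw [Function.iterate_succ_apply']
    calc dist (N (N^[k] y)) z ≤ dist (N^[k] y) z ^ 2 / Q := hN _
      _ ≤ (Q * (dist y z / Q) ^ 2 ^ k) ^ 2 / Q := by gcongr
      _ = Q * (dist y z / Q) ^ 2 ^ (k + 1) := by field_simp; ring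

section StepSize

theorem pow_le_of_le_rpow_one_div {h X : ℝ} {p : ℕ} (hh : 0 ≤ h) (hX : 0 ≤ X) (hp : p ≠ 0)
    (hle : h ≤ X ^ ((1 : ℝ) / p)) : h ^ p ≤ X := by
  calc h ^ p ≤ (X ^ ((1 : ℝ) / p)) ^ p := by gcongr
    _ = X := by rw [one_div, Real.rpow_inv_natCast_pow hX hp]

theorem mul_div_pow_le_of_le_rpow {Q c P h : ℝ} {τ : ℕ} (hτ : 1 ≤ τ) (hQ : 0 < Q) (hc : 0 ≤ c)
    (hP : 0 < P) (hh : 0 ≤ h)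
    (hle : h ≤ (Q ^ (2 * τ - 1) * c / P ^ (2 * τ)) ^ ((1 : ℝ) / (4 * (τ : ℝ) - 2))) :
    Q * (P * h ^ 2 / Q) ^ (2 * τ) ≤ c * h ^ 2 := by
  obtain ⟨j, rfl⟩ := Nat.exists_eq_add_of_le' hτ
  have hexp : (4 * ((j + 1 : ℕ) : ℝ) - 2) = ((4 * j + 2 : ℕ) : ℝ) := by push_cast; ring
  rw [hexp] at hle
  have hpow := pow_le_of_le_rpow_one_div hh (by positivity) (by omega) hle
  rw [show 2 * (j + 1) - 1 = 2 * j + 1 by omega] at hpow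
  rw [le_div_iff₀ (by positivity)] at hpow
  rw [div_pow, mul_div_assoc', div_le_iff₀ (by positivity)]
  calc Q * (P * h ^ 2) ^ (2 * (j + 1)) = h ^ (4 * j + 2) * P ^ (2 * (j + 1)) * (Q * h ^ 2) := by
        ring
    _ ≤ Q ^ (2 * j + 1) * c * (Q * h ^ 2) := by gcongr
    _ = c * h ^ 2 * Q ^ (2 * (j + 1)) := by ring

theorem mul_div_pow_eq_inv_mul {Q a h : ℝ} {τ : ℕ} (hτ : 1 ≤ τ) (hQ : Q ≠ 0) :
    Q * (a * h ^ 2 / Q) ^ (2 * τ) = (Q ^ (2 * τ - 1))⁻¹ * a ^ (2 * τ) * h ^ (4 * τ) := by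
  obtain ⟨j, rfl⟩ := Nat.exists_eq_add_of_le' hτ
  rw [show 2 * (j + 1) - 1 = 2 * j + 1 by omega, show 2 * (j + 1) = 2 * j + 1 + 1 by ring,
    pow_succ Q, div_pow, mul_pow, ← pow_mul]
  field_simp
  ring

theorem le_of_mul_div_pow_le {Q b : ℝ} {p : ℕ} (hQ : 0 < Q) (hb : 0 < b) (hp : 2 ≤ p)
    (hle : Q * (b / Q) ^ p ≤ b) : b ≤ Q := by
  have hr : 0 < b / Q := by positivity
  have : (b / Q) ^ (p - 1) ≤ 1 := by
    have h2 : (b / Q) ^ (p - 1) * (b / Q) ≤ 1 * (b / Q) := by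
      rw [← pow_succ, Nat.sub_add_cancel (by omega), one_mul, le_div_iff₀ hQ, mul_comm]
      exact hle
    exact le_of_mul_le_mul_right h2 hr
  rw [pow_le_one_iff_of_nonneg hr.le (by omega), div_le_one hQ] at this
  exact this

theorem mul_div_pow_two_pow_le {Q a b : ℝ} {τ : ℕ} (hτ : 1 ≤ τ) (hQ : 0 < Q) (ha : 0 ≤ a)
    (hab : a ≤ b) (hbQ : b ≤ Q) : Q * (a / Q) ^ 2 ^ τ ≤ Q * (b / Q) ^ (2 * τ) := by
  have hτ' : 2 * τ ≤ 2 ^ τ := by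
    obtain ⟨j, rfl⟩ := Nat.exists_eq_add_of_le' hτ
    have := j.lt_two_pow_self
    rw [pow_succ]; omega
  gcongr Q * ?_
  calc (a / Q) ^ 2 ^ τ ≤ (b / Q) ^ 2 ^ τ := by gcongr
    _ ≤ (b / Q) ^ (2 * τ) :=
      pow_le_pow_of_le_one (div_nonneg (ha.trans hab) hQ.le) ((div_le_one hQ).2 hbQ) hτ'

end StepSize

namespace TVOpt

variable {n : ℕ} (P : TVOpt n)

local notation "E" => EuclideanSpace ℝ (Fin n)

def δ₁ : ℝ := P.C0 * P.C1 / P.m ^ 2 + P.C2 / P.m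

def δ₂ : ℝ := P.C0 ^ 2 * P.C1 / (2 * P.m ^ 3) + P.C0 * P.C2 / P.m ^ 2 + P.C3 / (2 * P.m)

def δ₂' : ℝ := P.δ₂ + P.C3 / (2 * P.m)

def Q : ℝ := 2 * P.m / P.C1

theorem Q_pos (hC1 : 0 < P.C1) : 0 < P.Q := div_pos (mul_pos two_pos P.m_pos) hC1

theorem C0_nonneg : 0 ≤ P.C0 := (norm_nonneg _).trans (P.dtgrad_bound 0 0)

theorem C1_nonneg : 0 ≤ P.C1 := (norm_nonneg (P.d3 0 0)).trans (P.d3_bound 0 0)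

theorem C2_nonneg : 0 ≤ P.C2 := (norm_nonneg _).trans (P.dthess_bound 0 0)

theorem C3_nonneg : 0 ≤ P.C3 := (norm_nonneg _).trans (P.dttgrad_bound 0 0)

theorem δ₁_nonneg : 0 ≤ P.δ₁ := by
  have := P.m_pos; have := P.C0_nonneg; have := P.C1_nonneg; have := P.C2_nonneg
  rw [δ₁]; positivity

theorem δ₂'_nonneg : 0 ≤ P.δ₂' := by
  have := P.m_pos; have := P.C0_nonneg; have := P.C1_nonneg; have := P.C2_nonneg
  have := P.C3_nonneg
  rw [δ₂', δ₂]; positivity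

@[simp]
theorem hess_hessInv_apply (x : E) (t : ℝ) (v : E) : P.hess x t (P.hessInv x t v) = v :=
  congrArg (· v) (P.hessInv_right x t)

@[simp]
theorem hessInv_hess_apply (x : E) (t : ℝ) (v : E) : P.hessInv x t (P.hess x t v) = v :=
  congrArg (· v) (P.hessInv_left x t)

theorem norm_hessInv_apply_le (x : E) (t : ℝ) (v : E) : ‖P.hessInv x t v‖ ≤ ‖v‖ / P.m := by
  rw [le_div_iff₀ P.m_pos, mul_comm]
  simpa using mul_norm_le_norm_of_mul_sq_le_inner (P.strong_convex x t (P.hessInv x t v))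

theorem norm_hessInv_le (x : E) (t : ℝ) : ‖P.hessInv x t‖ ≤ P.m⁻¹ :=
  ContinuousLinearMap.opNorm_le_bound _ (inv_nonneg.2 P.m_pos.le) fun v => by
    simpa [div_eq_inv_mul] using P.norm_hessInv_apply_le x t v

theorem norm_hess_sub_le (t : ℝ) (a b : E) : ‖P.hess a t - P.hess b t‖ ≤ P.C1 * ‖a - b‖ :=
  convex_univ.norm_image_sub_le_of_norm_hasFDerivWithin_le
    (fun y _ => (P.d3_spec y t).hasFDerivWithinAt) (fun y _ => P.d3_bound y t) trivial trivial

theorem norm_hess_sub_le_time (x : E) (t s : ℝ) : ‖P.hess x t - P.hess x s‖ ≤ P.C2 * |t - s| :=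
  convex_univ.norm_image_sub_le_of_norm_hasDerivWithin_le
    (fun r _ => (P.dthess_spec x r).hasDerivWithinAt) (fun r _ => P.dthess_bound x r) trivial trivial

theorem norm_dtgrad_sub_le_time (x : E) (t s : ℝ) :
    ‖P.dtgrad x t - P.dtgrad x s‖ ≤ P.C3 * |t - s| :=
  convex_univ.norm_image_sub_le_of_norm_hasDerivWithin_le
    (fun r _ => (P.dttgrad_spec x r).hasDerivWithinAt) (fun r _ => P.dttgrad_bound x r)
    trivial trivial

theorem norm_grad_sub_le_time (x : E) (t s : ℝ) : ‖P.grad x t - P.grad x s‖ ≤ P.C0 * |t - s| :=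
  convex_univ.norm_image_sub_le_of_norm_hasDerivWithin_le
    (fun r _ => (P.dtgrad_spec x r).hasDerivWithinAt) (fun r _ => P.dtgrad_bound x r)
    trivial trivial

theorem norm_grad_sub_sub_hess_le (t : ℝ) (a b : E) :
    ‖P.grad b t - P.grad a t - P.hess a t (b - a)‖ ≤ P.C1 / 2 * ‖b - a‖ ^ 2 :=
  norm_sub_sub_fderiv_le_of_lipschitz (fun y => P.hess_spec y t) (P.norm_hess_sub_le t) a b

theorem norm_grad_sub_sub_dtgrad_le (x : E) (t s : ℝ) :
    ‖P.grad x s - P.grad x t - (s - t) • P.dtgrad x t‖ ≤ P.C3 / 2 * (s - t) ^ 2 :=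
  norm_sub_sub_smul_deriv_le_of_lipschitz (fun r => P.dtgrad_spec x r)
    (P.norm_dtgrad_sub_le_time x) t s

theorem mul_norm_sub_le_norm_grad_sub (t : ℝ) (a b : E) :
    P.m * ‖a - b‖ ≤ ‖P.grad a t - P.grad b t‖ :=
  mul_norm_sub_le_norm_sub_of_coercive (fun y => P.hess_spec y t) (P.strong_convex · t) a b

theorem norm_grad_sub_time_sub_le (x y : E) (t s : ℝ) :
    ‖(P.grad x s - P.grad x t) - (P.grad y s - P.grad y t)‖ ≤ P.C2 * |s - t| * ‖x - y‖ :=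
  convex_univ.norm_image_sub_le_of_norm_hasFDerivWithin_le
    (fun z _ => ((P.hess_spec z s).sub (P.hess_spec z t)).hasFDerivWithinAt)
    (fun z _ => P.norm_hess_sub_le_time z s t) trivial trivial

theorem norm_dtgrad_sub_le (t : ℝ) (x y : E) :
    ‖P.dtgrad x t - P.dtgrad y t‖ ≤ P.C2 * ‖x - y‖ := by
  refine ((P.dtgrad_spec x t).sub (P.dtgrad_spec y t)).le_of_lip'
    (mul_nonneg P.C2_nonneg (norm_nonneg _)) (Filter.Eventually.of_forall fun s => ?_)
  calc ‖(P.grad x s - P.grad y s) - (P.grad x t - P.grad y t)‖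
      = ‖(P.grad x s - P.grad x t) - (P.grad y s - P.grad y t)‖ := by congr 1; abel
    _ ≤ P.C2 * |s - t| * ‖x - y‖ := P.norm_grad_sub_time_sub_le x y t s
    _ = P.C2 * ‖x - y‖ * ‖s - t‖ := by rw [Real.norm_eq_abs]; ring

theorem norm_xstar_sub_le (t s : ℝ) : ‖P.xstar s - P.xstar t‖ ≤ P.C0 / P.m * |s - t| := by
  rw [div_mul_eq_mul_div, le_div_iff₀ P.m_pos, mul_comm]
  calc P.m * ‖P.xstar s - P.xstar t‖
      ≤ ‖P.grad (P.xstar s) t - P.grad (P.xstar t) t‖ := P.mul_norm_sub_le_norm_grad_sub t _ _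
    _ = ‖P.grad (P.xstar s) t - P.grad (P.xstar s) s‖ := by simp [xstar_grad]
    _ ≤ P.C0 * |s - t| := by rw [abs_sub_comm]; exact P.norm_grad_sub_le_time _ t s

def newtonStep (t : ℝ) (y : E) : E := y - P.hessInv y t (P.grad y t)

theorem norm_newtonStep_sub_xstar_le (t : ℝ) (y : E) :
    ‖P.newtonStep t y - P.xstar t‖ ≤ ‖y - P.xstar t‖ ^ 2 / P.Q := by
  set z := P.xstar t
  have hid : P.newtonStep t y - z
      = P.hessInv y t (P.grad z t - P.grad y t - P.hess y t (z - y)) := by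
    rw [newtonStep, P.xstar_grad, map_sub, map_sub, map_zero, hessInv_hess_apply]
    abel
  calc ‖P.newtonStep t y - z‖ ≤ ‖P.grad z t - P.grad y t - P.hess y t (z - y)‖ / P.m := by
        rw [hid]; exact P.norm_hessInv_apply_le y t _
    _ ≤ P.C1 / 2 * ‖z - y‖ ^ 2 / P.m :=
        div_le_div_of_nonneg_right (P.norm_grad_sub_sub_hess_le t y z) P.m_pos.le
    _ = ‖y - z‖ ^ 2 / P.Q := by rw [norm_sub_rev, Q, div_div_eq_mul_div]; ring

theorem norm_newtonStep_iterate_sub_xstar_le (hC1 : 0 < P.C1) (t : ℝ) (y : E) (τ : ℕ) :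
    ‖(P.newtonStep t)^[τ] y - P.xstar t‖ ≤ P.Q * (‖y - P.xstar t‖ / P.Q) ^ 2 ^ τ := by
  simpa only [dist_eq_norm] using dist_iterate_le_of_dist_le_sq_div (P.Q_pos hC1)
    (fun z => by simpa only [dist_eq_norm] using P.norm_newtonStep_sub_xstar_le t z) y τ

theorem norm_hessInv_sub_le (t : ℝ) (x y : E) :
    ‖P.hessInv x t - P.hessInv y t‖ ≤ P.C1 / P.m ^ 2 * ‖x - y‖ := by
  have hresolvent : P.hessInv x t - P.hessInv y t
      = (P.hessInv x t).comp ((P.hess y t - P.hess x t).comp (P.hessInv y t)) := by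
    ext1 v; simp
  calc ‖P.hessInv x t - P.hessInv y t‖
      ≤ ‖P.hessInv x t‖ * (‖P.hess y t - P.hess x t‖ * ‖P.hessInv y t‖) := by
        rw [hresolvent]
        exact (ContinuousLinearMap.opNorm_comp_le _ _).trans
          (by gcongr; exact ContinuousLinearMap.opNorm_comp_le _ _)
    _ ≤ P.m⁻¹ * (P.C1 * ‖y - x‖ * P.m⁻¹) := by
        have := P.m_pos
        have := P.C1_nonneg
        gcongr
        exacts [P.norm_hessInv_le x t, P.norm_hess_sub_le t y x, P.norm_hessInv_le y t]
    _ = P.C1 / P.m ^ 2 * ‖x - y‖ := by rw [norm_sub_rev]; ring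

theorem norm_hessInv_dtgrad_sub_le (t : ℝ) (x y : E) :
    ‖P.hessInv x t (P.dtgrad x t) - P.hessInv y t (P.dtgrad y t)‖
      ≤ P.δ₁ * ‖x - y‖ := by
  have := P.m_pos
  have := P.C1_nonneg
  have hsplit : P.hessInv x t (P.dtgrad x t) - P.hessInv y t (P.dtgrad y t)
      = (P.hessInv x t - P.hessInv y t) (P.dtgrad x t)
        + P.hessInv y t (P.dtgrad x t - P.dtgrad y t) := by
    simp only [sub_apply, map_sub]; abel
  calc _ ≤ ‖P.hessInv x t - P.hessInv y t‖ * ‖P.dtgrad x t‖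
        + ‖P.dtgrad x t - P.dtgrad y t‖ / P.m := by
        rw [hsplit]
        exact (norm_add_le _ _).trans (add_le_add (ContinuousLinearMap.le_opNorm _ _)
          (P.norm_hessInv_apply_le y t _))
    _ ≤ P.C1 / P.m ^ 2 * ‖x - y‖ * P.C0 + P.C2 * ‖x - y‖ / P.m := by
        gcongr
        exacts [P.norm_hessInv_sub_le t x y, P.dtgrad_bound x t, P.norm_dtgrad_sub_le t x y]
    _ = P.δ₁ * ‖x - y‖ := by rw [δ₁]; ring

theorem norm_xstar_add_sub_le (t h : ℝ) :
    ‖P.xstar (t + h) - P.xstar t + h • P.hessInv (P.xstar t) t (P.dtgrad (P.xstar t) t)‖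
      ≤ P.δ₂ * h ^ 2 := by
  have := P.m_pos
  have := P.C1_nonneg
  have := P.C2_nonneg
  set a := P.xstar t
  set b := P.xstar (t + h)
  have hΔ : ‖b - a‖ ≤ P.C0 / P.m * |h| := by simpa using P.norm_xstar_sub_le t (t + h)
  have hsplit : b - a + h • P.hessInv a t (P.dtgrad a t) = -P.hessInv a t
      ((P.grad b (t + h) - P.grad a (t + h) - P.hess a (t + h) (b - a))
        + (P.hess a (t + h) (b - a) - P.hess a t (b - a))
        + (P.grad a (t + h) - P.grad a t - h • P.dtgrad a t)) := by
    rw [P.xstar_grad, P.xstar_grad]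
    simp only [map_add, map_sub, map_smul, map_zero, hessInv_hess_apply]
    abel
  have hR2 : ‖P.hess a (t + h) (b - a) - P.hess a t (b - a)‖ ≤ P.C2 * (|h| * ‖b - a‖) := by
    rw [← sub_apply, ← mul_assoc]
    refine (ContinuousLinearMap.le_opNorm _ _).trans ?_
    simpa using mul_le_mul_of_nonneg_right (P.norm_hess_sub_le_time a (t + h) t) (norm_nonneg _)
  have hΔ2 : ‖b - a‖ ^ 2 ≤ (P.C0 / P.m) ^ 2 * h ^ 2 := by
    rw [← sq_abs h, ← mul_pow]; gcongr
  have hhΔ : |h| * ‖b - a‖ ≤ P.C0 / P.m * h ^ 2 := by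
    rw [← sq_abs h]
    calc |h| * ‖b - a‖ ≤ |h| * (P.C0 / P.m * |h|) := by gcongr
      _ = P.C0 / P.m * |h| ^ 2 := by ring
  calc _ ≤ (P.C1 / 2 * ‖b - a‖ ^ 2 + P.C2 * (|h| * ‖b - a‖) + P.C3 / 2 * h ^ 2) / P.m := by
        rw [hsplit, norm_neg]
        refine (P.norm_hessInv_apply_le a t _).trans (div_le_div_of_nonneg_right ?_ P.m_pos.le)
        refine norm_add₃_le.trans (add_le_add (add_le_add ?_ hR2) ?_)
        · exact P.norm_grad_sub_sub_hess_le (t + h) a b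
        · simpa using P.norm_grad_sub_sub_dtgrad_le a t (t + h)
    _ ≤ (P.C1 / 2 * ((P.C0 / P.m) ^ 2 * h ^ 2) + P.C2 * (P.C0 / P.m * h ^ 2)
          + P.C3 / 2 * h ^ 2) / P.m := by gcongr
    _ = P.δ₂ * h ^ 2 := by rw [δ₂]; field_simp

/-- The prediction `x_{k+1|k}` made at time `t = t_k` from `y = x_k`. -/
def antPredict (h t : ℝ) (y : E) : E :=
  y - h • P.hessInv y t (h⁻¹ • (P.grad y t - P.grad y (t - h)))

theorem norm_dtgrad_sub_backward_diff_le {h : ℝ} (hh : 0 < h) (y : E) (t : ℝ) :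
    ‖P.dtgrad y t - h⁻¹ • (P.grad y t - P.grad y (t - h))‖ ≤ P.C3 / 2 * h := by
  have hdiff : P.dtgrad y t - h⁻¹ • (P.grad y t - P.grad y (t - h))
      = h⁻¹ • (P.grad y (t - h) - P.grad y t - (t - h - t) • P.dtgrad y t) := by
    rw [show t - h - t = -h by ring, neg_smul, sub_neg_eq_add, smul_add, smul_smul,
      inv_mul_cancel₀ hh.ne', one_smul, smul_sub, smul_sub]
    abel
  rw [hdiff, norm_smul, norm_inv, Real.norm_of_nonneg hh.le, inv_mul_le_iff₀ hh]
  calc _ ≤ P.C3 / 2 * (t - h - t) ^ 2 := P.norm_grad_sub_sub_dtgrad_le y t (t - h)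
    _ = h * (P.C3 / 2 * h) := by ring

theorem norm_antPredict_sub_xstar_le {h : ℝ} (hh : 0 < h) (t : ℝ) (y : E) :
    ‖P.antPredict h t y - P.xstar (t + h)‖ ≤ (1 + h * P.δ₁) * ‖y - P.xstar t‖ + P.δ₂' * h ^ 2 := by
  set a := P.xstar t
  set d := h⁻¹ • (P.grad y t - P.grad y (t - h))
  have hsplit : P.antPredict h t y - P.xstar (t + h)
      = (y - a) - h • (P.hessInv y t (P.dtgrad y t) - P.hessInv a t (P.dtgrad a t))
        + h • P.hessInv y t (P.dtgrad y t - d)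
        - (P.xstar (t + h) - a + h • P.hessInv a t (P.dtgrad a t)) := by
    change y - h • P.hessInv y t d - _ = _
    rw [map_sub, smul_sub, smul_sub]
    abel
  have hdrift := P.norm_hessInv_dtgrad_sub_le t y a
  have hfd : ‖P.hessInv y t (P.dtgrad y t - d)‖ ≤ P.C3 / 2 * h / P.m :=
    (P.norm_hessInv_apply_le y t _).trans
      (div_le_div_of_nonneg_right (P.norm_dtgrad_sub_backward_diff_le hh y t) P.m_pos.le)
  have htraj := P.norm_xstar_add_sub_le t h
  rw [hsplit]
  refine (norm_sub_le _ _).trans ((add_le_add_left ((norm_add_le _ _).trans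
    (add_le_add_left (norm_sub_le _ _) _)) _).trans ?_)
  rw [norm_smul, norm_smul, Real.norm_of_nonneg hh.le]
  have := P.m_pos
  calc _ ≤ ‖y - a‖ + h * (P.δ₁ * ‖y - a‖) + h * (P.C3 / 2 * h / P.m) + P.δ₂ * h ^ 2 := by gcongr
    _ = _ := by rw [δ₂']; field_simp; ring

theorem norm_antStep_sub_xstar_le (hC1 : 0 < P.C1) {h : ℝ} (hh : 0 < h) {τ : ℕ} (hτ : 1 ≤ τ)
    (t : ℝ) (y : E) {e : ℝ} (he : (1 + h * P.δ₁) * ‖y - P.xstar t‖ + P.δ₂' * h ^ 2 ≤ e)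
    (heQ : e ≤ P.Q) :
    ‖(P.newtonStep (t + h))^[τ] (P.antPredict h t y) - P.xstar (t + h)‖
      ≤ P.Q * (e / P.Q) ^ (2 * τ) :=
  (P.norm_newtonStep_iterate_sub_xstar_le hC1 _ _ τ).trans <| mul_div_pow_two_pow_le hτ
    (P.Q_pos hC1) (norm_nonneg _) ((P.norm_antPredict_sub_xstar_le hh t y).trans he) heQ

end TVOpt

/-- **Theorem 4.** Local convergence of approximate Newton tracking (ANT):
if the sampling period and the initial error are small enough, the tracking error is
`O(h^(4τ))`, with `δ₂' := δ₂ + C₃/(2m)` replacing `δ₂`. -/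
theorem ant_convergence (n : ℕ) (P : TVOpt n) (h : ℝ) (hh : 0 < h)
    (τ : ℕ) (hτ : 1 ≤ τ) (hC1 : 0 < P.C1) (c : ℝ) (hc : 0 < c)
    (δ1 δ2 δ2' Q σ : ℝ)
    (hδ1 : δ1 = P.C0 * P.C1 / P.m ^ 2 + P.C2 / P.m)
    (hδ2 : δ2 = P.C0 ^ 2 * P.C1 / (2 * P.m ^ 3) + P.C0 * P.C2 / P.m ^ 2 + P.C3 / (2 * P.m))
    (hδ2' : δ2' = δ2 + P.C3 / (2 * P.m))
    (hQ : Q = 2 * P.m / P.C1)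
    (hσ : σ = 1 + h * δ1)
    (x : ℕ → EuclideanSpace ℝ (Fin n))
    (hrec : ∀ k : ℕ, x (k + 1) =
      (fun y => y - P.hessInv y (((k : ℝ) + 1) * h) (P.grad y (((k : ℝ) + 1) * h)))^[τ]
        (x k - h • P.hessInv (x k) ((k : ℝ) * h)
          (h⁻¹ • (P.grad (x k) ((k : ℝ) * h) - P.grad (x k) ((k : ℝ) * h - h)))))
    (hsmall : h ≤ min 1 ((Q ^ (2 * τ - 1) * c / ((1 + δ1) * c + δ2') ^ (2 * τ)) ^
      ((1 : ℝ) / (4 * (τ : ℝ) - 2))))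
    (hinit : ‖x 0 - P.xstar 0‖ ≤ c * h ^ 2) :
    ∀ k : ℕ, 1 ≤ k →
      ‖x k - P.xstar ((k : ℝ) * h)‖ ≤
        (Q ^ (2 * τ - 1))⁻¹ * (σ * c + δ2') ^ (2 * τ) * h ^ (4 * τ) := by
  obtain rfl : Q = P.Q := hQ
  obtain rfl : δ1 = P.δ₁ := hδ1
  obtain rfl : δ2' = P.δ₂' := by rw [hδ2', hδ2]; rfl
  subst hσ
  have := P.δ₁_nonneg; have := P.δ₂'_nonneg; have hQ0 := P.Q_pos hC1
  have hbudget : P.Q * (((1 + P.δ₁) * c + P.δ₂') * h ^ 2 / P.Q) ^ (2 * τ) ≤ c * h ^ 2 :=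
    mul_div_pow_le_of_le_rpow hτ hQ0 hc.le (by positivity) hh.le (hsmall.trans (min_le_right _ _))
  have hbQ : ((1 + P.δ₁) * c + P.δ₂') * h ^ 2 ≤ P.Q := le_of_mul_div_pow_le hQ0 (by positivity)
    (by omega) (hbudget.trans (mul_le_mul_of_nonneg_right (by nlinarith) (by positivity)))
  have hσ_le : ((1 + h * P.δ₁) * c + P.δ₂') * h ^ 2 ≤ ((1 + P.δ₁) * c + P.δ₂') * h ^ 2 := by
    have : h ≤ 1 := hsmall.trans (min_le_left _ _)
    gcongr; nlinarith
  have hstep (k : ℕ) (hk : ‖x k - P.xstar (k * h)‖ ≤ c * h ^ 2) :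
      ‖x (k + 1) - P.xstar ((k + 1 : ℕ) * h)‖
        ≤ P.Q * (((1 + h * P.δ₁) * c + P.δ₂') * h ^ 2 / P.Q) ^ (2 * τ) := by
    rw [hrec k, Nat.cast_succ, add_one_mul]
    refine P.norm_antStep_sub_xstar_le hC1 hh hτ (k * h) (x k) ?_ (hσ_le.trans hbQ)
    calc _ ≤ (1 + h * P.δ₁) * (c * h ^ 2) + P.δ₂' * h ^ 2 := by gcongr
      _ = _ := by ring
  have hinvariant (k : ℕ) : ‖x k - P.xstar (k * h)‖ ≤ c * h ^ 2 := by
    induction k with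
    | zero => simpa using hinit
    | succ k ih => exact (hstep k ih).trans (le_trans (by gcongr) hbudget)
  intro k hk
  obtain ⟨k, rfl⟩ := Nat.exists_eq_add_of_le' hk
  rw [← mul_div_pow_eq_inv_mul hτ hQ0.ne']
  exact hstep k (hinvariant k)
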